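/- arXiv:1812.02936 — 5 statements merged into one kernel-verified Lean document; each statement's English description precedes it below -/
import Mathlib

section
/- For every natural number ρ and L ≥ 1, the number of binary words x of length L with fewer than L/2 − ρ runs is at most 2^L / e^(2ρ²/L). -/
/-!
Record a word `x` by its first letter and its difference word `j ↦ (x j ≠ x (j + 1))`; this is
injective, and the runs of `x` are one more than the number of ones of its difference word.
So it suffices to count the words of length `L - 1` with at most `(L - 1)/2 - (ρ + 1/2)` ones:
Hoeffding's bound for this binomial tail, obtained from the exponential moment method and
`cosh x ≤ exp (x² / 2)`, gives `2 ^ (L - 1) * exp (-2 (ρ + 1/2)² / (L - 1))`, and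
`ρ² / L ≤ (ρ + 1/2)² / (L - 1)`.
-/

/-- The number of runs of a binary word `x` of length `L`:
`‖x‖ = |{j : x_j ≠ x_{j+1}}| + 1`. -/
def runCount (L : ℕ) (x : Fin L → Bool) : ℕ :=
  (Finset.univ.filter (fun j : Fin (L - 1) =>
      x ⟨j.1, by have := j.isLt; omega⟩ ≠ x ⟨j.1 + 1, by have := j.isLt; omega⟩)).card + 1

open Finset Real

section Hoeffding

lemma card_filter_le_sum_exp {ι : Type*} (s : Finset ι) (f : ι → ℝ) (a : ℝ) {l : ℝ}
    (hl : 0 ≤ l) : (#{x ∈ s | f x ≤ a} : ℝ) ≤ ∑ x ∈ s, exp (l * (a - f x)) := by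
  rw [card_filter, Nat.cast_sum]
  refine sum_le_sum fun x _ => ?_
  split_ifs with hx
  · exact_mod_cast one_le_exp (mul_nonneg hl (sub_nonneg.2 hx))
  · exact_mod_cast (exp_pos _).le

lemma sum_exp_neg_mul_card_true (n : ℕ) (l : ℝ) :
    ∑ d : Fin n → Bool, exp (-(l * #{i | d i})) = (1 + exp (-l)) ^ n := by
  have hterm : ∀ d : Fin n → Bool,
      exp (-(l * #{i | d i})) = ∏ i, (if d i then exp (-l) else 1) := by
    intro d
    rw [prod_ite, prod_const, prod_const_one, mul_one, ← exp_nat_mul]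
    ring_nf
  have hsum : 1 + exp (-l) = ∑ b : Bool, if b then exp (-l) else 1 := by simp [add_comm]
  simp_rw [hterm, hsum, Fintype.sum_pow]

lemma one_add_exp_neg_le (l : ℝ) : 1 + exp (-l) ≤ 2 * exp (-(l / 2) + l ^ 2 / 8) := by
  have hcosh : 1 + exp (-l) = 2 * exp (-(l / 2)) * cosh (l / 2) := by
    have h1 : exp (-(l / 2)) * exp (l / 2) = 1 := by rw [← exp_add]; simp
    have h2 : exp (-(l / 2)) * exp (-(l / 2)) = exp (-l) := by rw [← exp_add]; ring_nf
    rw [cosh_eq]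
    linear_combination -h1 - h2
  calc 1 + exp (-l) = 2 * exp (-(l / 2)) * cosh (l / 2) := hcosh
    _ ≤ 2 * exp (-(l / 2)) * exp ((l / 2) ^ 2 / 2) := by gcongr; exact cosh_le_exp_half_sq _
    _ = 2 * exp (-(l / 2) + l ^ 2 / 8) := by rw [mul_assoc, ← exp_add]; ring_nf

theorem card_card_true_le_half_sub_le (n : ℕ) (hn : 0 < n) {t : ℝ} (ht : 0 ≤ t) :
    (#{d : Fin n → Bool | (#{i | d i} : ℝ) ≤ n / 2 - t} : ℝ)
      ≤ 2 ^ n * exp (-(2 * t ^ 2 / n)) := by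
  set l : ℝ := 4 * t / n
  have hl : 0 ≤ l := by positivity
  calc (#{d : Fin n → Bool | (#{i | d i} : ℝ) ≤ n / 2 - t} : ℝ)
      ≤ ∑ d : Fin n → Bool, exp (l * ((n / 2 - t) - #{i | d i})) :=
        card_filter_le_sum_exp _ _ _ hl
    _ = exp (l * (n / 2 - t)) * (1 + exp (-l)) ^ n := by
        rw [← sum_exp_neg_mul_card_true, mul_sum]
        simp_rw [← exp_add]
        ring_nf
    _ ≤ exp (l * (n / 2 - t)) * (2 * exp (-(l / 2) + l ^ 2 / 8)) ^ n := by
        gcongr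
        exact one_add_exp_neg_le l
    _ = 2 ^ n * exp (-(2 * t ^ 2 / n)) := by
        rw [mul_pow, ← exp_nat_mul, mul_left_comm, ← exp_add]
        congr 2
        simp only [l]
        field_simp
        ring

end Hoeffding

section Runs

variable {L : ℕ}

def diffWord (x : Fin L → Bool) (j : Fin (L - 1)) : Bool :=
  x ⟨j, by omega⟩ != x ⟨j + 1, by omega⟩

lemma runCount_eq_card_diffWord (x : Fin L → Bool) : runCount L x = #{j | diffWord x j} + 1 := by
  simp [runCount, diffWord]

lemma injective_head_diffWord (hL : 0 < L) :
    Function.Injective fun x : Fin L → Bool => (x ⟨0, hL⟩, diffWord x) := by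
  intro x y hxy
  obtain ⟨h0, hd⟩ := Prod.ext_iff.1 hxy
  funext ⟨k, hk⟩
  induction k with
  | zero => exact h0
  | succ k ih =>
    have hdk := congrFun hd ⟨k, by omega⟩
    simp only [diffWord, ih (by omega)] at hdk
    simpa using hdk

lemma card_runCount_lt_le (hL : 0 < L) (r : ℝ) :
    (#{x : Fin L → Bool | (runCount L x : ℝ) < L / 2 - r} : ℝ)
      ≤ 2 * #{d : Fin (L - 1) → Bool | (#{i | d i} : ℝ) ≤ (L - 1 : ℕ) / 2 - (r + 1 / 2)} := by
  have hcast : ((L - 1 : ℕ) : ℝ) = L - 1 := Nat.cast_pred hL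
  set B := ({d : Fin (L - 1) → Bool | (#{i | d i} : ℝ) ≤ (L - 1 : ℕ) / 2 - (r + 1 / 2)} :
    Finset _)
  set P : Finset (Bool × (Fin (L - 1) → Bool)) := univ ×ˢ B
  have hmaps : Set.MapsTo (fun x : Fin L → Bool => (x ⟨0, hL⟩, diffWord x))
      ({x | (runCount L x : ℝ) < L / 2 - r} : Finset _) P := by
    intro x hx
    simp only [coe_filter, mem_univ, true_and, Set.mem_ofPred_eq, runCount_eq_card_diffWord,
      Nat.cast_add, Nat.cast_one] at hx
    simp only [P, B, coe_product, coe_univ, coe_filter, Set.mem_prod, Set.mem_univ, true_and,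
      mem_univ, Set.mem_ofPred_eq, hcast]
    linarith
  calc (#{x : Fin L → Bool | (runCount L x : ℝ) < L / 2 - r} : ℝ)
      ≤ #P := by
        exact_mod_cast card_le_card_of_injOn _ hmaps (injective_head_diffWord hL).injOn
    _ = 2 * #B := by rw [card_product, card_univ, Fintype.card_bool]; push_cast; rfl

end Runs

open Classical in
theorem count_words_few_runs (L ρ : ℕ) (hL : 1 ≤ L) :
    ((Finset.univ.filter
        (fun x : Fin L → Bool => (runCount L x : ℝ) < (L : ℝ) / 2 - ρ)).card : ℝ)
      ≤ (2 : ℝ) ^ L / Real.exp (2 * (ρ : ℝ) ^ 2 / L) := by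
  rw [div_eq_mul_inv (2 ^ L : ℝ), ← exp_neg]
  obtain rfl | hL2 := hL.eq_or_lt
  · have hempty : #{x : Fin 1 → Bool | (runCount 1 x : ℝ) < (1 : ℕ) / 2 - ρ} = 0 := by
      refine card_eq_zero.2 (filter_eq_empty_iff.2 fun x _ => ?_)
      have : (1 : ℝ) ≤ runCount 1 x := by exact_mod_cast Nat.le_add_left 1 _
      push_cast
      linarith [(Nat.cast_nonneg ρ : (0 : ℝ) ≤ ρ)]
    rw [hempty, Nat.cast_zero]
    positivity
  · have hL1 : ((L - 1 : ℕ) : ℝ) = L - 1 := Nat.cast_pred hL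
    calc _ ≤ 2 * (#{d : Fin (L - 1) → Bool |
            (#{i | d i} : ℝ) ≤ (L - 1 : ℕ) / 2 - (ρ + 1 / 2)} : ℝ) := card_runCount_lt_le hL _
      _ ≤ 2 * (2 ^ (L - 1) * exp (-(2 * (ρ + 1 / 2) ^ 2 / (L - 1 : ℕ)))) := by
        gcongr
        exact card_card_true_le_half_sub_le _ (by omega) (by positivity)
      _ ≤ 2 ^ L * exp (-(2 * ρ ^ 2 / L)) := by
        rw [← mul_assoc, ← pow_succ', Nat.sub_add_cancel hL, hL1]
        gcongr
        · have : (2 : ℝ) ≤ L := by exact_mod_cast hL2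
          linarith
        · linarith
        · linarith
end

section
/- For any M-element set S of binary sequences of length L with M ≥ s + t and 2^L ≥ M, the error ball B_{s,t,•}(S) of the (s,t,•) channel contains at least C(M, s+t)·C(2^L − M, t) distinct received sets, each consisting of exactly M − s sequences of length L. -/
open Classical in
/-- The error ball `B_{s,t,•}(S)` of the `(s,t,•)` channel: all received sets
obtained from `S` by losing up to `s` sequences and arbitrarily corrupting up to
`t` of the remaining sequences (duplicates merged). -/
noncomputable def ballBullet (L s t : ℕ) (S : Finset (Fin L → Bool)) :
    Finset (Finset (Fin L → Bool)) :=
  Finset.univ.filter (fun S' : Finset (Fin L → Bool) =>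
    ∃ Lost F : Finset (Fin L → Bool), Lost ⊆ S ∧ F ⊆ S ∧ Disjoint Lost F ∧
      Lost.card ≤ s ∧ F.card ≤ t ∧
      ∃ f : (Fin L → Bool) → (Fin L → Bool),
        (∀ x ∈ F, f x ≠ x) ∧ S' = (S \ (Lost ∪ F)) ∪ F.image f)

/-!
Keep `M - (s + t)` sequences `G ⊆ S`, lose `s` of the others and turn the remaining `t` into
an arbitrary `t`-set `F'` of sequences outside `S`. Since `F'` avoids `S`, the received set
`G ∪ F'` gives back `G` and `F'` as its parts inside and outside `S`, so distinct choices of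
`(G, F')` give distinct received sets, all of size `M - s`.
-/

namespace Finset

variable {α : Type*} [DecidableEq α]

theorem exists_image_eq_of_disjoint_of_card_eq {F F' : Finset α} (hdisj : Disjoint F F')
    (hcard : F.card = F'.card) :
    ∃ f : α → α, (∀ x ∈ F, f x ≠ x) ∧ F.image f = F' := by
  let e : F ≃ F' := equivOfCardEq hcard
  let f : α → α := fun x => if hx : x ∈ F then e ⟨x, hx⟩ else x
  have hf : ∀ x (hx : x ∈ F), f x = e ⟨x, hx⟩ := fun x hx => dif_pos hx
  refine ⟨f, fun x hx hfx => disjoint_left.mp hdisj hx ?_, ?_⟩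
  · exact hfx ▸ hf x hx ▸ (e ⟨x, hx⟩).2
  · ext y
    refine ⟨?_, fun hy => mem_image.mpr ⟨e.symm ⟨y, hy⟩, (e.symm ⟨y, hy⟩).2, ?_⟩⟩
    · intro hy
      obtain ⟨x, hx, rfl⟩ := mem_image.mp hy
      exact hf x hx ▸ (e ⟨x, hx⟩).2
    · rw [hf _ (e.symm ⟨y, hy⟩).2]
      simp

theorem union_inter_eq_left_of_subset_of_disjoint {G F' S : Finset α} (hG : G ⊆ S)
    (hF' : Disjoint F' S) : (G ∪ F') ∩ S = G := by
  rw [union_inter_distrib_right, inter_eq_left.mpr hG, disjoint_iff_inter_eq_empty.mp hF',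
    union_empty]

theorem union_sdiff_eq_right_of_subset_of_disjoint {G F' S : Finset α} (hG : G ⊆ S)
    (hF' : Disjoint F' S) : (G ∪ F') \ S = F' := by
  rw [union_sdiff_distrib, sdiff_eq_empty_iff_subset.mpr hG, empty_union,
    sdiff_eq_self_of_disjoint hF']

theorem injOn_union_of_subset_of_disjoint (S : Finset α) :
    Set.InjOn (fun p : Finset α × Finset α => p.1 ∪ p.2) {p | p.1 ⊆ S ∧ Disjoint p.2 S} := by
  rintro ⟨G, F'⟩ ⟨hG, hF'⟩ ⟨H, H'⟩ ⟨hH, hH'⟩ (heq : G ∪ F' = H ∪ H')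
  dsimp only at hG hF' hH hH'
  have hGH : G = H := by
    rw [← union_inter_eq_left_of_subset_of_disjoint hG hF',
      ← union_inter_eq_left_of_subset_of_disjoint hH hH', heq]
  have hF'H' : F' = H' := by
    rw [← union_sdiff_eq_right_of_subset_of_disjoint hG hF',
      ← union_sdiff_eq_right_of_subset_of_disjoint hH hH', heq]
  rw [hGH, hF'H']

end Finset

open Finset

theorem union_mem_ballBullet {L s t : ℕ} {S G F' : Finset (Fin L → Bool)} (hG : G ⊆ S)
    (hF' : Disjoint F' S) (hF't : F'.card ≤ t) (hF'G : F'.card ≤ (S \ G).card)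
    (hGs : (S \ G).card ≤ s + F'.card) :
    G ∪ F' ∈ ballBullet L s t S := by
  classical
  obtain ⟨F, hFG, hFcard⟩ := exists_subset_card_eq hF'G
  obtain ⟨f, hfix, hfF⟩ := exists_image_eq_of_disjoint_of_card_eq
    (disjoint_of_subset_left (hFG.trans sdiff_subset) hF'.symm) hFcard
  have hLost : (S \ G) \ F ∪ F = S \ G := sdiff_union_of_subset hFG
  simp only [ballBullet, mem_filter, mem_univ, true_and]
  refine ⟨(S \ G) \ F, F, sdiff_subset.trans sdiff_subset, hFG.trans sdiff_subset,
    sdiff_disjoint, ?_, hFcard ▸ hF't, f, hfix, ?_⟩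
  · rw [card_sdiff_of_subset hFG]
    omega
  · rw [hLost, hfF, Finset.sdiff_sdiff_eq_self hG]

open Classical in
theorem ball_bullet_lower_bound_general (L M s t : ℕ) (S : Finset (Fin L → Bool))
    (hS : S.card = M) (hst : s + t ≤ M) :
    M.choose (s + t) * (2 ^ L - M).choose t
      ≤ ((ballBullet L s t S).filter (fun S' => S'.card = M - s)).card := by
  have hcompl : Sᶜ.card = 2 ^ L - M := by simp [card_compl, hS]
  have hchoices : ((S.powersetCard (M - (s + t))) ×ˢ (Sᶜ.powersetCard t)).card
      = M.choose (s + t) * (2 ^ L - M).choose t := by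
    rw [card_product, card_powersetCard, card_powersetCard, hS, hcompl, Nat.choose_symm hst]
  rw [← hchoices]
  refine card_le_card_of_injOn (fun p => p.1 ∪ p.2) ?_
    ((injOn_union_of_subset_of_disjoint S).mono ?_)
  · rintro ⟨G, F'⟩ hp
    simp only [mem_coe, mem_product, mem_powersetCard, subset_compl_iff_disjoint_right] at hp
    obtain ⟨⟨hG, hGcard⟩, hF', hF'card⟩ := hp
    have hSG : (S \ G).card = s + t := by rw [card_sdiff_of_subset hG]; omega
    simp only [mem_coe, mem_filter]
    refine ⟨union_mem_ballBullet hG hF' hF'card.le (by omega) (by omega), ?_⟩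
    rw [card_union_of_disjoint (disjoint_of_subset_left hG hF'.symm), hGcard, hF'card]
    omega
  · rintro ⟨G, F'⟩ hp
    simp only [mem_coe, mem_product, mem_powersetCard, subset_compl_iff_disjoint_right] at hp
    exact ⟨hp.1.1, hp.2.1⟩

open Classical in
theorem ball_bullet_lower_bound (L M s t : ℕ) (S : Finset (Fin L → Bool))
    (hS : S.card = M) (hst : s + t ≤ M) (hM : M ≤ 2 ^ L) :
    M.choose (s + t) * (2 ^ L - M).choose t
      ≤ ((ballBullet L s t S).filter (fun S' => S'.card = M - s)).card :=
  ball_bullet_lower_bound_general L M s t S hS hst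
end

section
/- Under the hypotheses of the sphere-packing argument for the (s,t,•) channel, any (s,t,•)-correcting code C of M-element subsets of {0,1}^L satisfies |C| ≤ C(2^L, M−s) / (C(M, s+t)·C(2^L−M, t)). -/
open Finset

theorem Finset.card_mul_le_card_of_pairwiseDisjoint {ι α : Type*} [DecidableEq α]
    {C : Finset ι} {A : ι → Finset α} {U : Finset α} {n : ℕ}
    (hA : ∀ i ∈ C, A i ⊆ U) (hcard : ∀ i ∈ C, #(A i) = n)
    (hdisj : (C : Set ι).PairwiseDisjoint A) : #C * n ≤ #U :=
  calc #C * n = ∑ i ∈ C, #(A i) := by rw [sum_congr rfl hcard, sum_const, smul_eq_mul]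
    _ = #(C.biUnion A) := (card_biUnion hdisj).symm
    _ ≤ #U := card_le_card (biUnion_subset.mpr hA)

section KeepAndAdd

variable {α : Type*} [DecidableEq α] [Fintype α]

def keepAndAdd (S : Finset α) (k t : ℕ) : Finset (Finset α) :=
  (S.powersetCard k ×ˢ Sᶜ.powersetCard t).image fun p => p.1 ∪ p.2

theorem mem_keepAndAdd {S X : Finset α} {k t : ℕ} :
    X ∈ keepAndAdd S k t ↔ ∃ K ⊆ S, #K = k ∧ ∃ E ⊆ Sᶜ, #E = t ∧ K ∪ E = X := by
  simp only [keepAndAdd, mem_image, mem_product, mem_powersetCard, Prod.exists]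
  grind

theorem card_keepAndAdd (S : Finset α) (k t : ℕ) :
    #(keepAndAdd S k t) = (#S).choose k * (Fintype.card α - #S).choose t := by
  rw [keepAndAdd, card_image_of_injOn, card_product, card_powersetCard, card_powersetCard,
    card_compl]
  rintro ⟨K, E⟩ hKE ⟨K', E'⟩ hKE' h
  simp only [coe_product, Set.mem_prod, mem_coe, mem_powersetCard] at hKE hKE' h
  have parts : ∀ K E : Finset α, K ⊆ S → E ⊆ Sᶜ →
      (K ∪ E) ∩ S = K ∧ (K ∪ E) \ S = E := fun K E hK hE => by
    constructor <;> grind [mem_compl]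
  obtain ⟨hK, hE⟩ := parts K E hKE.1.1 hKE.2.1
  obtain ⟨hK', hE'⟩ := parts K' E' hKE'.1.1 hKE'.2.1
  rw [h] at hK hE
  exact Prod.ext (hK.symm.trans hK') (hE.symm.trans hE')

theorem keepAndAdd_subset_powersetCard (S : Finset α) (k t : ℕ) :
    keepAndAdd S k t ⊆ univ.powersetCard (k + t) := by
  intro X hX
  obtain ⟨K, hK, rfl, E, hE, rfl, rfl⟩ := mem_keepAndAdd.mp hX
  have : Disjoint K E := disjoint_of_subset_left hK (subset_compl_iff_disjoint_left.mp hE)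
  exact mem_powersetCard.mpr ⟨subset_univ _, card_union_of_disjoint this⟩

end KeepAndAdd

theorem union_mem_ballBullet_s12 {L s t : ℕ} {S K E : Finset (Fin L → Bool)} (hK : K ⊆ S)
    (hE : E ⊆ Sᶜ) (hKst : #K + s + t = #S) (hEt : #E = t) : K ∪ E ∈ ballBullet L s t S := by
  have hcard : #(S \ K) = s + t := by rw [card_sdiff_of_subset hK]; omega
  obtain ⟨Lost, hLost, hLs⟩ := exists_subset_card_eq (s := S \ K) (n := s) (by omega)
  set F := (S \ K) \ Lost
  have hFt : #F = t := by rw [card_sdiff_of_subset hLost]; omega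
  obtain ⟨f, hf⟩ : ∃ f : (Fin L → Bool) → (Fin L → Bool), Set.BijOn f F E :=
    F.finite_toSet.exists_bijOn_of_encard_eq <| by
      simp only [Set.encard_coe_eq_coe_finsetCard, hFt, hEt]
  have hFS : F ⊆ S := sdiff_subset.trans sdiff_subset
  simp only [ballBullet, mem_filter, mem_univ, true_and]
  refine ⟨Lost, F, hLost.trans sdiff_subset, hFS, disjoint_sdiff,
    hLs.le, hFt.le, f, fun x hx hfx => mem_compl.mp (hE (hfx ▸ hf.mapsTo hx)) (hFS hx), ?_⟩
  have hFE : F.image f = E := coe_injective (by rw [coe_image, hf.image_eq])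
  rw [union_sdiff_of_subset hLost, Finset.sdiff_sdiff_eq_self hK, hFE]

theorem keepAndAdd_subset_ballBullet {L s t k : ℕ} {S : Finset (Fin L → Bool)}
    (hk : k + s + t = #S) : keepAndAdd S k t ⊆ ballBullet L s t S := by
  intro X hX
  obtain ⟨K, hK, rfl, E, hE, hEt, rfl⟩ := mem_keepAndAdd.mp hX
  exact union_mem_ballBullet_s12 hK hE hk hEt

theorem sphere_packing_bullet (L M s t : ℕ)
    (hst : s + t ≤ M) (hM : M + t ≤ 2 ^ L)
    (C : Finset (Finset (Fin L → Bool)))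
    (hcard : ∀ S ∈ C, S.card = M)
    (hdisj : ∀ S₁ ∈ C, ∀ S₂ ∈ C, S₁ ≠ S₂ →
      ballBullet L s t S₁ ∩ ballBullet L s t S₂ = ∅) :
    (C.card : ℝ) ≤ ((2 ^ L).choose (M - s) : ℝ)
      / ((M.choose (s + t) : ℝ) * ((2 ^ L - M).choose t : ℝ)) := by
  have hk : M - s - t + s + t = M := by omega
  have packing : #C * (M.choose (s + t) * (2 ^ L - M).choose t)
      ≤ #(univ.powersetCard (M - s) : Finset (Finset (Fin L → Bool))) := by
    refine card_mul_le_card_of_pairwiseDisjoint (A := fun S => keepAndAdd S (M - s - t) t)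
      (fun S _ => ?_) (fun S hS => ?_) (fun S₁ h₁ S₂ h₂ hne => ?_)
    · exact (keepAndAdd_subset_powersetCard S _ _).trans_eq
        (by rw [show M - s - t + t = M - s by omega])
    · rw [card_keepAndAdd, hcard S hS, Fintype.card_fun, Fintype.card_bool, Fintype.card_fin,
        Nat.choose_symm_of_eq_add (show M = M - s - t + (s + t) by omega)]
    · exact (disjoint_iff_inter_eq_empty.mpr (hdisj S₁ h₁ S₂ h₂ hne)).mono
        (keepAndAdd_subset_ballBullet (hk.trans (hcard S₁ h₁).symm))
        (keepAndAdd_subset_ballBullet (hk.trans (hcard S₂ h₂).symm))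
  rw [card_powersetCard, card_univ, Fintype.card_fun, Fintype.card_bool, Fintype.card_fin]
    at packing
  have hpos : 0 < M.choose (s + t) * (2 ^ L - M).choose t :=
    Nat.mul_pos (Nat.choose_pos hst) (Nat.choose_pos (by omega))
  rw [le_div_iff₀ (by exact_mod_cast hpos)]
  exact_mod_cast packing
end

section
/- Let Y ⊆ Σ₂^L have V(x) = {y : B(x) ∩ B(y) ≠ ∅} with |V(x)| ≤ V for all x, where B(·) are ε-error balls. Then the number of M-element subsets S of {0,1}^L whose largest subset forming a code with pairwise disjoint ε-error balls has size at most K is at most C(2^L, K)·C(K·V, M−K). -/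
/-!
Fix a largest code `Y ⊆ S`. By maximality every word of `S \ Y` has a ball meeting the ball of
some word of `Y`, and this stays true after enlarging `Y` inside `S` to a set `T` of exactly `K`
words. So `S = T ∪ U`, where `T` is one of `C(2^L, K)` sets and `U` is an `(M - K)`-subset of the
at most `K · V` words whose balls meet a ball around `T`.
-/

open Finset

section BallCodes

variable {α β : Type*} [Fintype α] [DecidableEq β] (B : α → Finset β)

/-- The set `V(x)` of the paper. -/
def conflicts (x : α) : Finset α :=
  univ.filter fun y => (B x ∩ B y).Nonempty

variable {B}

lemma mem_conflicts {x y : α} : y ∈ conflicts B x ↔ (B x ∩ B y).Nonempty := by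
  simp [conflicts]

lemma exists_pairwiseDisjoint_subset_sdiff_subset_biUnion_conflicts [DecidableEq α]
    (S : Finset α) :
    ∃ Y ⊆ S, (Y : Set α).PairwiseDisjoint B ∧ S \ Y ⊆ Y.biUnion (conflicts B) := by
  classical
  obtain ⟨Y, hYmem, hYmax⟩ := exists_max_image
    (S.powerset.filter fun Y : Finset α => (Y : Set α).PairwiseDisjoint B) card
    ⟨∅, by simp⟩
  rw [mem_filter, mem_powerset] at hYmem
  obtain ⟨hYS, hYcode⟩ := hYmem
  refine ⟨Y, hYS, hYcode, fun s hs => ?_⟩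
  obtain ⟨hsS, hsY⟩ := mem_sdiff.1 hs
  by_contra hfar
  simp only [mem_biUnion, mem_conflicts, not_exists, not_and, not_nonempty_iff_eq_empty] at hfar
  have hins : ((insert s Y : Finset α) : Set α).PairwiseDisjoint B := by
    rw [coe_insert]
    refine hYcode.insert fun y hy _ => ?_
    rw [disjoint_iff_inter_eq_empty, inter_comm]
    exact hfar y hy
  have := hYmax (insert s Y) (mem_filter.2 ⟨mem_powerset.2 (insert_subset hsS hYS), hins⟩)
  rw [card_insert_of_notMem hsY] at this
  omega

lemma exists_card_eq_sdiff_subset_biUnion_conflicts [DecidableEq α] {S : Finset α} {K : ℕ}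
    (hcode : ∀ Y ⊆ S, (Y : Set α).PairwiseDisjoint B → Y.card ≤ K) (hKS : K ≤ S.card) :
    ∃ T ⊆ S, T.card = K ∧ S \ T ⊆ T.biUnion (conflicts B) := by
  obtain ⟨Y, hYS, hYcode, hYdom⟩ :=
    exists_pairwiseDisjoint_subset_sdiff_subset_biUnion_conflicts (B := B) S
  obtain ⟨T, hYT, hTS, hTK⟩ := exists_subsuperset_card_eq hYS (hcode Y hYS hYcode) hKS
  refine ⟨T, hTS, hTK, ?_⟩
  calc S \ T ⊆ S \ Y := sdiff_subset_sdiff subset_rfl hYT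
    _ ⊆ Y.biUnion (conflicts B) := hYdom
    _ ⊆ T.biUnion (conflicts B) := biUnion_subset_biUnion_of_subset_left _ hYT

end BallCodes

theorem card_le_choose_mul_choose_of_forall_eq_union {α : Type*} [Fintype α] [DecidableEq α]
    {𝒮 : Finset (Finset α)} (N : Finset α → Finset α) {K m n : ℕ}
    (hN : ∀ T : Finset α, T.card = K → (N T).card ≤ n)
    (h𝒮 : ∀ S ∈ 𝒮, ∃ T U, T.card = K ∧ U ⊆ N T ∧ U.card = m ∧ S = T ∪ U) :
    𝒮.card ≤ (Fintype.card α).choose K * n.choose m := by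
  have hsub : 𝒮 ⊆ ((univ.powersetCard K).sigma fun T => (N T).powersetCard m).image
      fun p => p.1 ∪ p.2 := by
    intro S hS
    obtain ⟨T, U, hT, hUN, hU, rfl⟩ := h𝒮 S hS
    exact mem_image.2 ⟨⟨T, U⟩, by simp [mem_powersetCard, hT, hUN, hU], rfl⟩
  calc 𝒮.card ≤ ((univ.powersetCard K).sigma fun T => (N T).powersetCard m).card :=
        (card_le_card hsub).trans card_image_le
    _ = ∑ T ∈ univ.powersetCard K, (N T).card.choose m := by
        simp only [card_sigma, card_powersetCard]
    _ ≤ ∑ _T ∈ univ.powersetCard K, n.choose m :=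
        sum_le_sum fun T hT => Nat.choose_le_choose m (hN T (mem_powersetCard.1 hT).2)
    _ = (Fintype.card α).choose K * n.choose m := by
        rw [sum_const, card_powersetCard, card_univ, smul_eq_mul]

open Classical in
theorem count_sets_small_code (L M K Vmax : ℕ) {β : Type*}
    (B : (Fin L → Bool) → Finset β)
    (hV : ∀ x : Fin L → Bool,
      (Finset.univ.filter (fun y : Fin L → Bool => (B x ∩ B y).Nonempty)).card ≤ Vmax)
    (hKM : K ≤ M) :
    ((Finset.univ.filter (fun S : Finset (Fin L → Bool) =>
        S.card = M ∧
        ∀ Y ⊆ S, (∀ y₁ ∈ Y, ∀ y₂ ∈ Y, y₁ ≠ y₂ → B y₁ ∩ B y₂ = ∅) →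
          Y.card ≤ K)).card)
      ≤ (2 ^ L).choose K * (K * Vmax).choose (M - K) := by
  have hcard : Fintype.card (Fin L → Bool) = 2 ^ L := by simp
  rw [← hcard]
  refine card_le_choose_mul_choose_of_forall_eq_union (fun T => T.biUnion (conflicts B))
    (fun T hT => hT ▸ card_biUnion_le_card_mul _ _ _ fun x _ => hV x) fun S hS => ?_
  obtain ⟨hSM, hcode⟩ := (mem_filter.1 hS).2
  obtain ⟨T, hTS, hTK, hdom⟩ := exists_card_eq_sdiff_subset_biUnion_conflicts
    (fun Y hYS hY => hcode Y hYS fun y₁ h₁ y₂ h₂ hne =>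
      disjoint_iff_inter_eq_empty.1 (hY h₁ h₂ hne)) (hSM ▸ hKM)
  exact ⟨T, S \ T, hTK, hdom, by rw [card_sdiff_of_subset hTS, hSM, hTK],
    (union_sdiff_of_subset hTS).symm⟩
end

section
/- For every x ∈ {0,1}^L, the size of the ε-deletion sphere satisfies C(||x|| − ε + 1, ε) ≤ |S_ε^D(x)| ≤ C(||x|| + ε − 1, ε), where ||x|| is the number of runs of x. -/
/-!
Write `x = aᵏ⁺¹ t` with `t` not starting with `a`, so that `t` has one run fewer than `x`.
A subsequence of `x` with `ε + 1` deletions either keeps the whole first run, followed by an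
element of `S_{ε+1}(t)`, or lies in `S_ε(aᵏ t)`; induction on `k` and on the number of runs then
gives Pascal's recursion for the upper bound `C(r + ε - 1, ε)`. For the lower bound write further
`t = bᵐ⁺¹ u`: the sets `aᵏ⁺¹ · S_{ε+1}(t)` and `aᵏ bᵐ⁺¹ · S_ε(u)` are disjoint subsets of
`S_{ε+1}(x)`, which gives the recursion of `C(r + 1 - ε, ε)`, the number of ways to choose `ε`
pairwise non-adjacent runs out of `r`.
-/

/-- The number of runs of a binary word, i.e. the number of maximal blocks of
equal consecutive symbols. -/
def runs (x : List Bool) : ℕ := (x.destutter (· ≠ ·)).length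

open Finset

namespace List

variable {α : Type*}

theorem destutter'_ne_replicate_append [DecidableEq α] (a : α) (k : ℕ) (t : List α) :
    (replicate k a ++ t).destutter' (· ≠ ·) a = t.destutter' (· ≠ ·) a := by
  induction k with
  | zero => rfl
  | succ k ih => simpa [replicate_succ] using ih

theorem destutter'_ne_of_head?_ne [DecidableEq α] {a : α} {t : List α} (h : t.head? ≠ some a) :
    t.destutter' (· ≠ ·) a = a :: t.destutter (· ≠ ·) := by
  cases t with
  | nil => rfl
  | cons c s => exact destutter'_cons_pos _ (by simpa [eq_comm] using h)

theorem length_destutter_ne_replicate_append [DecidableEq α] {a : α} {t : List α} (k : ℕ)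
    (h : t.head? ≠ some a) :
    ((replicate (k + 1) a ++ t).destutter (· ≠ ·)).length = (t.destutter (· ≠ ·)).length + 1 := by
  rw [replicate_succ, cons_append, destutter_cons', destutter'_ne_replicate_append,
    destutter'_ne_of_head?_ne h, length_cons]

theorem exists_cons_eq_replicate_append (c : α) (s : List α) :
    ∃ k t, c :: s = replicate (k + 1) c ++ t ∧ t.head? ≠ some c := by
  induction s generalizing c with
  | nil => exact ⟨0, [], rfl, by simp⟩
  | cons d s ih =>
    by_cases hdc : d = c
    · obtain ⟨k, t, hs, ht⟩ := ih d
      subst hdc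
      exact ⟨k + 1, t, by rw [hs]; rfl, ht⟩
    · exact ⟨0, d :: s, rfl, by simpa using hdc⟩

theorem strong_induction_on_runs {P : List α → Prop} (x : List α) (nil : P [])
    (replicate_append : ∀ a k t, t.head? ≠ some a →
      (∀ s : List α, s.length ≤ t.length → P s) → P (replicate (k + 1) a ++ t)) :
    P x := by
  induction h : x.length using Nat.strong_induction_on generalizing x with
  | _ n ih =>
    cases x with
    | nil => exact nil
    | cons c s =>
      obtain ⟨k, t, hx, ht⟩ := exists_cons_eq_replicate_append c s
      rw [hx] at h ⊢
      exact replicate_append c k t ht fun s hs => ih s.length (by simp at h; omega) s rfl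

theorem setOf_sublist_length_eq_sub_of_lt {ε : ℕ} {x : List α} (h : x.length < ε) :
    {y | y.length = x.length - ε ∧ y <+ x} = {[]} := by
  ext y
  simp only [Set.mem_ofPred_eq, Nat.sub_eq_zero_of_le h.le, length_eq_zero_iff,
    Set.mem_singleton_iff, and_iff_left_iff_imp]
  rintro rfl
  exact nil_sublist x

end List

open List

section DeletionSet

variable {α : Type*} [DecidableEq α]

/-- Stated with `y.length + ε = x.length` rather than `y.length = x.length - ε`, so that it is
empty (and not `{[]}`) when `ε > x.length`. -/
def deletionSet (ε : ℕ) (x : List α) : Finset (List α) :=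
  {y ∈ x.sublists.toFinset | y.length + ε = x.length}

@[simp]
theorem mem_deletionSet {ε : ℕ} {x y : List α} :
    y ∈ deletionSet ε x ↔ y <+ x ∧ y.length + ε = x.length := by
  simp [deletionSet]

theorem deletionSet_zero (x : List α) : deletionSet 0 x = {x} := by
  ext y
  simp only [mem_deletionSet, add_zero, Finset.mem_singleton]
  exact ⟨fun ⟨h, hl⟩ => h.eq_of_length hl, by rintro rfl; exact ⟨Sublist.refl _, rfl⟩⟩

theorem deletionSet_nil_succ (ε : ℕ) : deletionSet (ε + 1) ([] : List α) = ∅ := by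
  ext
  simp

theorem deletionSet_nonempty {ε : ℕ} {x : List α} (h : ε ≤ x.length) :
    (deletionSet ε x).Nonempty :=
  ⟨x.drop ε, mem_deletionSet.2 ⟨drop_sublist _ _, by simp; omega⟩⟩

theorem image_append_subset_deletionSet {p p' : List α} {δ : ℕ} (hp : p <+ p')
    (hlen : p.length + δ = p'.length) (ε : ℕ) (t : List α) :
    (deletionSet ε t).image (p ++ ·) ⊆ deletionSet (ε + δ) (p' ++ t) := by
  intro y hy
  obtain ⟨z, hz, rfl⟩ := mem_image.1 hy
  obtain ⟨hzt, hzl⟩ := mem_deletionSet.1 hz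
  exact mem_deletionSet.2 ⟨hp.append hzt, by simp; omega⟩

theorem deletionSet_succ_replicate_append_subset (a : α) (k ε : ℕ) (t : List α) :
    deletionSet (ε + 1) (replicate (k + 1) a ++ t) ⊆
      (deletionSet (ε + 1) t).image (replicate (k + 1) a ++ ·) ∪
        deletionSet ε (replicate k a ++ t) := by
  intro y hy
  obtain ⟨⟨y₁, y₂, rfl, h₁, h₂⟩, hlen⟩ := (mem_deletionSet.1 hy).imp_left sublist_append_iff.1
  obtain ⟨j, hj, rfl⟩ := sublist_replicate_iff.1 h₁
  simp only [length_append, length_replicate] at hlen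
  rw [mem_union, mem_image]
  rcases hj.lt_or_eq with hj | rfl
  · refine .inr (mem_deletionSet.2 ⟨?_, by simp; omega⟩)
    exact ((replicate_sublist_replicate a).2 (by omega)).append h₂
  · exact .inl ⟨y₂, mem_deletionSet.2 ⟨h₂, by omega⟩, rfl⟩

theorem card_deletionSet_replicate_append_le (a : α) {t : List α} {n : ℕ}
    (ht : ∀ ε, #(deletionSet ε t) ≤ (n + ε - 1).choose ε) (k ε : ℕ) :
    #(deletionSet ε (replicate k a ++ t)) ≤ (n + ε).choose ε := by
  induction k generalizing ε with
  | zero => exact (ht ε).trans (Nat.choose_le_choose ε (Nat.sub_le _ _))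
  | succ k ih =>
    cases ε with
    | zero => simp [deletionSet_zero]
    | succ ε =>
      calc #(deletionSet (ε + 1) (replicate (k + 1) a ++ t))
          ≤ #(deletionSet (ε + 1) t) + #(deletionSet ε (replicate k a ++ t)) :=
            (card_le_card (deletionSet_succ_replicate_append_subset a k ε t)).trans
              ((card_union_le _ _).trans (Nat.add_le_add_right card_image_le _))
        _ ≤ (n + ε).choose (ε + 1) + (n + ε).choose ε := Nat.add_le_add (ht (ε + 1)) (ih ε)
        _ = (n + (ε + 1)).choose (ε + 1) := by rw [add_comm, ← add_assoc, Nat.choose_succ_succ]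

theorem card_add_card_le_card_deletionSet {a b : α} (hab : a ≠ b) (k m ε : ℕ) (u : List α) :
    #(deletionSet (ε + 1) (replicate (m + 1) b ++ u)) + #(deletionSet ε u) ≤
      #(deletionSet (ε + 1) (replicate (k + 1) a ++ (replicate (m + 1) b ++ u))) := by
  have hdisj : Disjoint
      ((deletionSet (ε + 1) (replicate (m + 1) b ++ u)).image (replicate (k + 1) a ++ ·))
      ((deletionSet ε u).image (replicate k a ++ replicate (m + 1) b ++ ·)) := by
    simp only [Finset.disjoint_left, mem_image]
    rintro _ ⟨y, -, rfl⟩ ⟨z, -, hz⟩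
    rw [append_assoc, replicate_succ (a := b), replicate_succ' (a := a), append_assoc] at hz
    exact hab (cons.inj (append_cancel_left hz)).1.symm
  calc #(deletionSet (ε + 1) (replicate (m + 1) b ++ u)) + #(deletionSet ε u)
      = #((deletionSet (ε + 1) (replicate (m + 1) b ++ u)).image (replicate (k + 1) a ++ ·)) +
          #((deletionSet ε u).image (replicate k a ++ replicate (m + 1) b ++ ·)) := by
        rw [card_image_of_injective _ (append_right_injective _),
          card_image_of_injective _ (append_right_injective _)]
    _ = #((deletionSet (ε + 1) (replicate (m + 1) b ++ u)).image (replicate (k + 1) a ++ ·) ∪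
          (deletionSet ε u).image (replicate k a ++ replicate (m + 1) b ++ ·)) :=
        (card_union_of_disjoint hdisj).symm
    _ ≤ _ := card_le_card (union_subset ?_ ?_)
  · exact image_append_subset_deletionSet (Sublist.refl _) (add_zero _) (ε + 1) _
  · rw [← append_assoc]
    refine image_append_subset_deletionSet ?_ (by simp; omega) ε u
    exact ((replicate_sublist_replicate a).2 k.le_succ).append (Sublist.refl _)

theorem coe_deletionSet {ε : ℕ} {x : List α} (h : ε ≤ x.length) :
    (deletionSet ε x : Set (List α)) = {y | y.length = x.length - ε ∧ y <+ x} := by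
  ext y
  simp only [mem_coe, mem_deletionSet, Set.mem_ofPred_eq]
  exact ⟨fun ⟨hy, hl⟩ => ⟨by omega, hy⟩, fun ⟨hl, hy⟩ => ⟨hy, by omega⟩⟩

end DeletionSet

theorem runs_pos {x : List Bool} (hx : x ≠ []) : 0 < runs x :=
  length_pos_iff.2 (mt (destutter_eq_nil _).1 hx)

theorem runs_le_length (x : List Bool) : runs x ≤ x.length :=
  (destutter_sublist _ _).length_le

theorem runs_replicate_append {a : Bool} {t : List Bool} (k : ℕ) (h : t.head? ≠ some a) :
    runs (replicate (k + 1) a ++ t) = runs t + 1 :=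
  length_destutter_ne_replicate_append k h

theorem card_deletionSet_le_choose_runs (x : List Bool) (ε : ℕ) :
    #(deletionSet ε x) ≤ (runs x + ε - 1).choose ε := by
  induction x using List.strong_induction_on_runs generalizing ε with
  | nil => cases ε <;> simp [deletionSet_zero, deletionSet_nil_succ]
  | replicate_append a k t ht ih =>
    rw [runs_replicate_append k ht, Nat.add_right_comm, Nat.add_sub_cancel]
    exact card_deletionSet_replicate_append_le a (ih t le_rfl) (k + 1) ε

theorem choose_runs_le_card_deletionSet (x : List Bool) (ε : ℕ) :
    (runs x + 1 - ε).choose ε ≤ #(deletionSet ε x) := by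
  induction x using List.strong_induction_on_runs generalizing ε with
  | nil => cases ε <;> simp [deletionSet_zero, runs]
  | replicate_append a k t ht ih =>
    rw [runs_replicate_append k ht]
    cases ε with
    | zero => simp [deletionSet_zero]
    | succ ε =>
      cases t with
      | nil =>
        cases ε with
        | zero => simpa [runs] using (deletionSet_nonempty (x := replicate (k + 1) a)
            (ε := 1) (by simp)).card_pos
        | succ ε => simp [runs, Nat.choose_eq_zero_of_lt]
      | cons c s =>
        obtain ⟨m, u, hs, hu⟩ := exists_cons_eq_replicate_append c s
        have hac : a ≠ c := by simpa [eq_comm] using ht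
        rw [hs] at ih ⊢
        rw [runs_replicate_append m hu]
        have pascal : (runs u + 1 + 1 + 1 - (ε + 1)).choose (ε + 1) ≤
            (runs u + 1 - ε).choose (ε + 1) + (runs u + 1 - ε).choose ε :=
          (Nat.choose_le_choose (ε + 1) (show _ ≤ runs u + 1 - ε + 1 by omega)).trans_eq
            (by rw [Nat.choose_succ_succ', add_comm])
        refine pascal.trans ((Nat.add_le_add ?_ (ih u (by simp) ε)).trans
          (card_add_card_le_card_deletionSet hac k m ε u))
        simpa [runs_replicate_append m hu] using ih _ le_rfl (ε + 1)

theorem deletion_sphere_size_bounds (L ε : ℕ) (hL : 1 ≤ L)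
    (x : List Bool) (hx : x.length = L) :
    (runs x - ε + 1).choose ε
        ≤ {y : List Bool | y.length = L - ε ∧ y.Sublist x}.ncard ∧
      {y : List Bool | y.length = L - ε ∧ y.Sublist x}.ncard
        ≤ (runs x + ε - 1).choose ε := by
  subst hx
  have hruns_pos : 0 < runs x := runs_pos (ne_nil_of_length_pos hL)
  have hruns_le : runs x ≤ x.length := runs_le_length x
  rcases le_or_gt ε x.length with hε | hε
  · rw [← coe_deletionSet hε, Set.ncard_coe_finset]
    refine ⟨le_trans ?_ (choose_runs_le_card_deletionSet x ε), card_deletionSet_le_choose_runs x ε⟩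
    rcases le_or_gt ε (runs x) with h | h
    · rw [Nat.sub_add_comm h]
    · rw [Nat.choose_eq_zero_of_lt (by omega)]
      exact Nat.zero_le _
  · rw [setOf_sublist_length_eq_sub_of_lt hε, Set.ncard_singleton]
    exact ⟨(Nat.choose_eq_zero_of_lt (by omega)).trans_le (Nat.zero_le 1),
      Nat.choose_pos (by omega)⟩
end
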